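/- arXiv:2203.12006 — 2 statements merged into one kernel-verified Lean document; each statement's English description precedes it below -/
import Mathlib

section
/- Let χ be a non-principal Dirichlet character modulo k and let c > 0. Then there is a constant C (depending only on c) such that for all T ≥ 3 and all s = σ + it with |σ − 1| ≤ c/log(kT) and |t| ≤ T, one has |L(s, χ)| ≤ C·log(kT). -/
open Complex Finset intervalIntegral

namespace LogBdAux

lemma sum_Ioc_window {k : ℕ} [NeZero k] (χ : DirichletCharacter ℂ k) (hχ : χ ≠ 1) (a : ℕ) :
    ∑ j ∈ Finset.Ioc a (a + k), χ (j : ZMod k) = 0 := by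
  have h0 : ∑ x : ZMod k, χ x = 0 := MulChar.sum_eq_zero_of_ne_one hχ
  rw [← h0]
  have hk : 0 < k := Nat.pos_of_ne_zero (NeZero.ne k)
  refine Finset.sum_nbij' (fun j => (j : ZMod k))
    (fun x => a + 1 + (x - ((a + 1 : ℕ) : ZMod k)).val) ?_ ?_ ?_ ?_ ?_
  · intro j hj; exact Finset.mem_univ _
  · intro x _
    have hv : (x - ((a + 1 : ℕ) : ZMod k)).val < k := ZMod.val_lt _
    simp only [Finset.mem_Ioc]; omega
  · intro j hj
    rw [Finset.mem_Ioc] at hj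
    have h1 : ((j : ZMod k) - ((a + 1 : ℕ) : ZMod k)) = ((j - (a + 1) : ℕ) : ZMod k) := by
      rw [Nat.cast_sub (by omega)]
    rw [h1, ZMod.val_natCast_of_lt (by omega)]
    omega
  · intro x _
    push_cast
    rw [ZMod.natCast_val, ZMod.cast_id]
    ring
  · intro j hj; rfl

lemma norm_sum_Ioc_le {k : ℕ} [NeZero k] (χ : DirichletCharacter ℂ k) (hχ : χ ≠ 1) (a b : ℕ) :
    ‖∑ j ∈ Finset.Ioc a b, χ (j : ZMod k)‖ ≤ (k : ℝ) := by
  induction b using Nat.strong_induction_on with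
  | _ b ih =>
    have hk : 0 < k := Nat.pos_of_ne_zero (NeZero.ne k)
    rcases le_or_gt b (a + k) with hb | hb
    · calc ‖∑ j ∈ Finset.Ioc a b, χ (j : ZMod k)‖
          ≤ ∑ j ∈ Finset.Ioc a b, ‖χ (j : ZMod k)‖ := norm_sum_le _ _
        _ ≤ ∑ _j ∈ Finset.Ioc a b, (1 : ℝ) :=
            Finset.sum_le_sum fun i _ => χ.norm_le_one _
        _ = ((Finset.Ioc a b).card : ℝ) := by simp
        _ ≤ (k : ℝ) := by
            rw [Nat.card_Ioc]; exact_mod_cast Nat.le_of_lt_succ (by omega)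
    · have h1 : a ≤ b - k := by omega
      have h2 : b - k ≤ b := by omega
      have hsplit := Finset.sum_Ioc_consecutive (fun j : ℕ => χ (j : ZMod k)) h1 h2
      have hz : ∑ j ∈ Finset.Ioc (b - k) b, χ (j : ZMod k) = 0 := by
        have := sum_Ioc_window χ hχ (b - k)
        rwa [Nat.sub_add_cancel (by omega)] at this
      rw [← hsplit, hz, add_zero]
      exact ih (b - k) (by omega)


lemma rpow_neg_base_mono {x y σ : ℝ} (hx : 0 < x) (hxy : x ≤ y) (hσ : 0 ≤ σ) :
    y ^ (-σ) ≤ x ^ (-σ) := by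
  rw [Real.rpow_neg (by linarith), Real.rpow_neg hx.le]
  exact inv_anti₀ (Real.rpow_pos_of_pos hx _) (Real.rpow_le_rpow hx.le hxy hσ)

lemma cpow_diff_norm_le {x : ℝ} (hx : 1 ≤ x) {s : ℂ} (hs : 0 < s.re) :
    ‖(x : ℂ) ^ (-s) - ((x + 1 : ℝ) : ℂ) ^ (-s)‖ ≤
      (‖s‖ / s.re) * (x ^ (-s.re) - (x + 1) ^ (-s.re)) := by
  have hx0 : (0 : ℝ) < x := by linarith
  have hs0 : s ≠ 0 := fun h => by simp [h] at hs
  have hderiv : ∀ t ∈ Set.uIcc x (x + 1),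
      HasDerivAt (fun y : ℝ => ((y : ℂ)) ^ (-s)) (-s * (t : ℂ) ^ (-s - 1)) t := by
    intro t ht
    rw [Set.uIcc_of_le (by linarith)] at ht
    have ht0 : t ≠ 0 := by nlinarith [ht.1]
    have hr : -s - 1 ≠ -1 := fun h => hs0 (by linear_combination -h)
    have H := hasDerivAt_ofReal_cpow_const' ht0 hr
    have h1 : -s - 1 + 1 = -s := by ring
    rw [h1] at H
    have H2 := H.const_mul (-s)
    have hfun : (fun y : ℝ => -s * ((y : ℂ) ^ (-s) / (-s))) = fun y : ℝ => (y : ℂ) ^ (-s) := by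
      funext y; rw [mul_comm, div_mul_cancel₀ _ (neg_ne_zero.mpr hs0)]
    rw [hfun] at H2
    exact H2
  have hcont : ContinuousOn (fun t : ℝ => -s * (t : ℂ) ^ (-s - 1)) (Set.uIcc x (x + 1)) := by
    refine continuousOn_const.mul (ContinuousOn.cpow ?_ continuousOn_const ?_)
    · exact Complex.continuous_ofReal.continuousOn
    · intro t ht
      rw [Set.uIcc_of_le (by linarith)] at ht
      exact Complex.ofReal_mem_slitPlane.mpr (by linarith [ht.1])
  have hInt : IntervalIntegrable (fun t : ℝ => -s * (t : ℂ) ^ (-s - 1)) MeasureTheory.volume x (x + 1) :=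
    hcont.intervalIntegrable
  have heq := intervalIntegral.integral_eq_sub_of_hasDerivAt hderiv hInt
  have hIntg : IntervalIntegrable (fun t : ℝ => ‖s‖ * t ^ (-s.re - 1)) MeasureTheory.volume x (x + 1) := by
    refine ContinuousOn.intervalIntegrable (continuousOn_const.mul ?_)
    refine ContinuousOn.rpow_const continuousOn_id fun t ht => Or.inl ?_
    rw [Set.uIcc_of_le (by linarith)] at ht
    intro h; rw [h] at ht; linarith [ht.1]
  have hbd : ‖∫ t in x..(x + 1), -s * (t : ℂ) ^ (-s - 1)‖ ≤
      |∫ t in x..(x + 1), ‖s‖ * t ^ (-s.re - 1)| := by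
    refine intervalIntegral.norm_integral_le_abs_of_norm_le
      ((MeasureTheory.ae_restrict_iff' measurableSet_uIoc).mpr (.of_forall fun t ht => ?_)) hIntg
    rw [Set.uIoc_of_le (by linarith)] at ht
    have ht0 : 0 < t := lt_trans hx0 ht.1
    rw [norm_mul, norm_neg, Complex.norm_cpow_eq_rpow_re_of_pos ht0]
    have hre : (-s - 1).re = -s.re - 1 := by simp
    rw [hre]
  have hval : ∫ t in x..(x + 1), t ^ (-s.re - 1) =
      ((x + 1) ^ (-s.re - 1 + 1) - x ^ (-s.re - 1 + 1)) / (-s.re - 1 + 1) := by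
    apply integral_rpow
    right
    constructor
    · intro h; rw [sub_eq_neg_self] at h; linarith
    · rw [Set.uIcc_of_le (by linarith)]; intro h; linarith [h.1]
  have hmono : (x + 1) ^ (-s.re) ≤ x ^ (-s.re) :=
    rpow_neg_base_mono hx0 (by linarith) hs.le
  calc ‖(x : ℂ) ^ (-s) - ((x + 1 : ℝ) : ℂ) ^ (-s)‖
      = ‖∫ t in x..(x + 1), -s * (t : ℂ) ^ (-s - 1)‖ := by
        rw [heq, norm_sub_rev]
    _ ≤ |∫ t in x..(x + 1), ‖s‖ * t ^ (-s.re - 1)| := hbd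
    _ = (‖s‖ / s.re) * (x ^ (-s.re) - (x + 1) ^ (-s.re)) := by
        rw [intervalIntegral.integral_const_mul, hval]
        have h1 : -s.re - 1 + 1 = -s.re := by ring
        rw [h1, abs_mul, abs_norm, abs_div,
          abs_of_nonpos (by linarith : (x + 1) ^ (-s.re) - x ^ (-s.re) ≤ 0),
          abs_of_nonpos (by linarith : -s.re ≤ 0)]
        field_simp
        ring


lemma rpow_sub_rpow_le {x σ : ℝ} (hx : 1 ≤ x) (hσ : 0 < σ) :
    x ^ (-σ) - (x + 1) ^ (-σ) ≤ σ * x ^ (-σ - 1) := by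
  have hx0 : (0 : ℝ) < x := by linarith
  have hval : ∫ t in x..(x + 1), t ^ (-σ - 1) =
      ((x + 1) ^ (-σ - 1 + 1) - x ^ (-σ - 1 + 1)) / (-σ - 1 + 1) := by
    apply integral_rpow
    right
    refine ⟨fun h => by rw [sub_eq_neg_self] at h; linarith, ?_⟩
    rw [Set.uIcc_of_le (by linarith)]; intro h; linarith [h.1]
  have hle : ∫ t in x..(x + 1), t ^ (-σ - 1) ≤ x ^ (-σ - 1) := by
    have := intervalIntegral.norm_integral_le_of_norm_le_const
      (C := x ^ (-σ - 1)) (f := fun t : ℝ => t ^ (-σ - 1)) (a := x) (b := x + 1) ?_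
    · calc ∫ t in x..(x + 1), t ^ (-σ - 1) ≤ |∫ t in x..(x + 1), t ^ (-σ - 1)| := le_abs_self _
        _ ≤ x ^ (-σ - 1) * |x + 1 - x| := this
        _ = x ^ (-σ - 1) := by simp
    · intro t ht
      rw [Set.uIoc_of_le (by linarith)] at ht
      have ht0 : 0 < t := lt_trans hx0 ht.1
      rw [Real.norm_eq_abs, _root_.abs_of_nonneg (Real.rpow_nonneg ht0.le _)]
      have : -σ - 1 = -(σ + 1) := by ring
      rw [this]
      exact rpow_neg_base_mono hx0 ht.1.le (by linarith)
  have h1 : -σ - 1 + 1 = -σ := by ring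
  rw [h1] at hval
  have hσ' : -σ ≠ 0 := by linarith
  rw [eq_div_iff hσ'] at hval
  have h2 : x ^ (-σ) - (x + 1) ^ (-σ) = σ * ∫ t in x..(x + 1), t ^ (-σ - 1) := by
    linear_combination hval
  rw [h2]
  exact mul_le_mul_of_nonneg_left hle hσ.le

noncomputable def tailTerm (k : ℕ) [NeZero k] (χ : DirichletCharacter ℂ k) (M j : ℕ) (s : ℂ) : ℂ :=
  (∑ i ∈ Finset.Ioc M (M + 1 + j), χ (i : ZMod k)) *
    (((M + 1 + j : ℕ) : ℂ) ^ (-s) - ((M + 2 + j : ℕ) : ℂ) ^ (-s))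

noncomputable def tailF (k : ℕ) [NeZero k] (χ : DirichletCharacter ℂ k) (M : ℕ) (s : ℂ) : ℂ :=
  ∑' j : ℕ, tailTerm k χ M j s

noncomputable def FF (k : ℕ) [NeZero k] (χ : DirichletCharacter ℂ k) (M : ℕ) (s : ℂ) : ℂ :=
  (∑ n ∈ Finset.Icc 1 M, χ (n : ZMod k) * (n : ℂ) ^ (-s)) + tailF k χ M s

lemma tailTerm_norm_le {k : ℕ} [NeZero k] {χ : DirichletCharacter ℂ k} (hχ : χ ≠ 1)
    {M : ℕ} (hM : 1 ≤ M) {s : ℂ} (hs : 0 < s.re) (j : ℕ) :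
    ‖tailTerm k χ M j s‖ ≤ (k * (‖s‖ / s.re)) *
      (((M + 1 + j : ℕ) : ℝ) ^ (-s.re) - ((M + 2 + j : ℕ) : ℝ) ^ (-s.re)) := by
  have hx : (1 : ℝ) ≤ ((M + 1 + j : ℕ) : ℝ) := by exact_mod_cast Nat.one_le_iff_ne_zero.mpr (by omega)
  have hcast : ((M + 2 + j : ℕ) : ℝ) = ((M + 1 + j : ℕ) : ℝ) + 1 := by push_cast; ring
  have hcastC : ((M + 2 + j : ℕ) : ℂ) = ((((M + 1 + j : ℕ) : ℝ) + 1 : ℝ) : ℂ) := by push_cast; ring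
  have hcastC1 : ((M + 1 + j : ℕ) : ℂ) = ((((M + 1 + j : ℕ) : ℝ)) : ℂ) := by push_cast; ring
  rw [tailTerm, norm_mul, hcast, hcastC, hcastC1]
  exact mul_le_mul (norm_sum_Ioc_le χ hχ _ _) (cpow_diff_norm_le hx hs)
    (norm_nonneg _) (Nat.cast_nonneg k) |>.trans_eq (by ring)

lemma tail_partial_sum_bound {k : ℕ} [NeZero k] {χ : DirichletCharacter ℂ k} (hχ : χ ≠ 1)
    {M : ℕ} (hM : 1 ≤ M) {s : ℂ} (hs : 0 < s.re) (N : ℕ) :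
    ∑ j ∈ Finset.range N, ‖tailTerm k χ M j s‖ ≤
      (k * (‖s‖ / s.re)) * ((M + 1 : ℕ) : ℝ) ^ (-s.re) := by
  have htel : ∑ j ∈ Finset.range N,
      (((M + 1 + j : ℕ) : ℝ) ^ (-s.re) - ((M + 2 + j : ℕ) : ℝ) ^ (-s.re)) =
      ((M + 1 : ℕ) : ℝ) ^ (-s.re) - ((M + 1 + N : ℕ) : ℝ) ^ (-s.re) := by
    have := Finset.sum_range_sub' (fun j => ((M + 1 + j : ℕ) : ℝ) ^ (-s.re)) N
    simp only [Nat.add_zero] at this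
    rw [← this]
    refine Finset.sum_congr rfl fun j _ => ?_
    congr 2
    push_cast
    ring
  calc ∑ j ∈ Finset.range N, ‖tailTerm k χ M j s‖
      ≤ ∑ j ∈ Finset.range N, (k * (‖s‖ / s.re)) *
          (((M + 1 + j : ℕ) : ℝ) ^ (-s.re) - ((M + 2 + j : ℕ) : ℝ) ^ (-s.re)) :=
        Finset.sum_le_sum fun j _ => tailTerm_norm_le hχ hM hs j
    _ = (k * (‖s‖ / s.re)) * (((M + 1 : ℕ) : ℝ) ^ (-s.re) - ((M + 1 + N : ℕ) : ℝ) ^ (-s.re)) := by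
        rw [← Finset.mul_sum, htel]
    _ ≤ (k * (‖s‖ / s.re)) * ((M + 1 : ℕ) : ℝ) ^ (-s.re) := by
        have h1 : (0 : ℝ) ≤ ((M + 1 + N : ℕ) : ℝ) ^ (-s.re) := Real.rpow_nonneg (Nat.cast_nonneg _) _
        have h2 : (0 : ℝ) ≤ (k : ℝ) * (‖s‖ / s.re) := by positivity
        nlinarith

lemma tail_summable_norm {k : ℕ} [NeZero k] {χ : DirichletCharacter ℂ k} (hχ : χ ≠ 1)
    {M : ℕ} (hM : 1 ≤ M) {s : ℂ} (hs : 0 < s.re) :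
    Summable (fun j => ‖tailTerm k χ M j s‖) :=
  summable_of_sum_range_le (fun _ => norm_nonneg _) (tail_partial_sum_bound hχ hM hs)

lemma tail_tsum_norm_le {k : ℕ} [NeZero k] {χ : DirichletCharacter ℂ k} (hχ : χ ≠ 1)
    {M : ℕ} (hM : 1 ≤ M) {s : ℂ} (hs : 0 < s.re) :
    ∑' j, ‖tailTerm k χ M j s‖ ≤ (k * (‖s‖ / s.re)) * ((M + 1 : ℕ) : ℝ) ^ (-s.re) :=
  Summable.tsum_le_of_sum_range_le (tail_summable_norm hχ hM hs) (tail_partial_sum_bound hχ hM hs)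


lemma tailTerm_norm_le' {k : ℕ} [NeZero k] {χ : DirichletCharacter ℂ k} (hχ : χ ≠ 1)
    {M : ℕ} (hM : 1 ≤ M) {s : ℂ} (hs : 0 < s.re) (j : ℕ) :
    ‖tailTerm k χ M j s‖ ≤ (k * ‖s‖) * ((M + 1 + j : ℕ) : ℝ) ^ (-s.re - 1) := by
  have hx : (1 : ℝ) ≤ ((M + 1 + j : ℕ) : ℝ) := by
    exact_mod_cast Nat.one_le_iff_ne_zero.mpr (by omega)
  have hcast : ((M + 2 + j : ℕ) : ℝ) = ((M + 1 + j : ℕ) : ℝ) + 1 := by push_cast; ring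
  calc ‖tailTerm k χ M j s‖
      ≤ (k * (‖s‖ / s.re)) *
        (((M + 1 + j : ℕ) : ℝ) ^ (-s.re) - ((M + 2 + j : ℕ) : ℝ) ^ (-s.re)) :=
        tailTerm_norm_le hχ hM hs j
    _ ≤ (k * (‖s‖ / s.re)) * (s.re * ((M + 1 + j : ℕ) : ℝ) ^ (-s.re - 1)) := by
        refine mul_le_mul_of_nonneg_left ?_ (by positivity)
        rw [hcast]
        exact rpow_sub_rpow_le hx hs
    _ = (k * ‖s‖) * ((M + 1 + j : ℕ) : ℝ) ^ (-s.re - 1) := by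
        field_simp

lemma tailF_differentiableAt (k : ℕ) [NeZero k] {χ : DirichletCharacter ℂ k} (hχ : χ ≠ 1)
    {M : ℕ} (hM : 1 ≤ M) {s₀ : ℂ} (h : 1 / 4 < s₀.re) :
    DifferentiableAt ℂ (tailF k χ M) s₀ := by
  set R : ℝ := ‖s₀‖ + 1 with hR
  have hR0 : 0 < R := by positivity
  set U : Set ℂ := {s : ℂ | 1 / 4 < s.re} ∩ Metric.ball 0 R with hU
  have hUopen : IsOpen U :=
    (isOpen_lt continuous_const Complex.continuous_re).inter Metric.isOpen_ball
  have hs₀U : s₀ ∈ U := ⟨h, by simp [R, Metric.mem_ball, dist_zero_right]⟩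
  have hsum : Summable (fun j : ℕ => (k * R) * ((M + 1 + j : ℕ) : ℝ) ^ (-(5 / 4 : ℝ))) := by
    apply Summable.mul_left
    have hbase : Summable (fun n : ℕ => ((n : ℝ)) ^ (-(5 / 4 : ℝ))) :=
      Real.summable_nat_rpow.mpr (by norm_num)
    have := (summable_nat_add_iff (f := fun n : ℕ => ((n : ℝ)) ^ (-(5 / 4 : ℝ))) (M + 1)).mpr hbase
    refine this.congr fun j => ?_
    congr 1
    push_cast
    ring
  have hdiff : ∀ j : ℕ, DifferentiableOn ℂ (fun s => tailTerm k χ M j s) U := by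
    intro j
    have h1 : ((M + 1 + j : ℕ) : ℂ) ≠ 0 := Nat.cast_ne_zero.mpr (by omega)
    have h2 : ((M + 2 + j : ℕ) : ℂ) ≠ 0 := Nat.cast_ne_zero.mpr (by omega)
    apply DifferentiableOn.const_mul
    exact ((differentiable_neg.const_cpow (Or.inl h1)).sub
      (differentiable_neg.const_cpow (Or.inl h2))).differentiableOn
  have hbound : ∀ (j : ℕ) (w : ℂ), w ∈ U →
      ‖tailTerm k χ M j w‖ ≤ (k * R) * ((M + 1 + j : ℕ) : ℝ) ^ (-(5 / 4 : ℝ)) := by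
    intro j w hw
    obtain ⟨hw1, hw2⟩ := hw
    have hwre : 0 < w.re := lt_trans (by norm_num) hw1
    have hx : (1 : ℝ) ≤ ((M + 1 + j : ℕ) : ℝ) := by
      exact_mod_cast Nat.one_le_iff_ne_zero.mpr (by omega)
    calc ‖tailTerm k χ M j w‖ ≤ (k * ‖w‖) * ((M + 1 + j : ℕ) : ℝ) ^ (-w.re - 1) :=
        tailTerm_norm_le' hχ hM hwre j
      _ ≤ (k * R) * ((M + 1 + j : ℕ) : ℝ) ^ (-(5 / 4 : ℝ)) := by
          have hwR : ‖w‖ ≤ R := by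
            have := Metric.mem_ball.mp hw2
            rw [dist_zero_right] at this
            linarith
          refine mul_le_mul (by nlinarith [norm_nonneg w, Nat.cast_nonneg (α := ℝ) k]) ?_
            (Real.rpow_nonneg (by linarith) _) (by positivity)
          exact Real.rpow_le_rpow_of_exponent_le hx (by simp only [Set.mem_setOf_eq] at hw1; linarith)
  have := differentiableOn_tsum_of_summable_norm hsum hdiff hUopen hbound
  exact (this.differentiableAt (hUopen.mem_nhds hs₀U))

lemma FF_differentiableAt (k : ℕ) [NeZero k] {χ : DirichletCharacter ℂ k} (hχ : χ ≠ 1)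
    {M : ℕ} (hM : 1 ≤ M) {s₀ : ℂ} (h : 1 / 4 < s₀.re) :
    DifferentiableAt ℂ (FF k χ M) s₀ := by
  apply DifferentiableAt.add
  · apply DifferentiableAt.fun_sum
    intro n hn
    rw [Finset.mem_Icc] at hn
    have h1 : ((n : ℕ) : ℂ) ≠ 0 := Nat.cast_ne_zero.mpr (by omega)
    exact ((differentiable_neg.const_cpow (Or.inl h1)).const_mul _).differentiableAt
  · exact tailF_differentiableAt k hχ hM h


lemma abel_partial (k : ℕ) [NeZero k] (χ : DirichletCharacter ℂ k) (M : ℕ) (s : ℂ) (N : ℕ) :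
    ∑ j ∈ Finset.range N, tailTerm k χ M j s =
      (∑ j ∈ Finset.range N, χ ((M + 1 + j : ℕ) : ZMod k) * ((M + 1 + j : ℕ) : ℂ) ^ (-s)) -
        (∑ i ∈ Finset.Ioc M (M + N), χ (i : ZMod k)) * ((M + 1 + N : ℕ) : ℂ) ^ (-s) := by
  induction N with
  | zero => simp
  | succ N ih =>
    rw [Finset.sum_range_succ, Finset.sum_range_succ, ih]
    have e1 : M + 1 + N = (M + N) + 1 := by omega
    have hrec : ∑ i ∈ Finset.Ioc M (M + 1 + N), χ (i : ZMod k) =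
        (∑ i ∈ Finset.Ioc M (M + N), χ (i : ZMod k)) + χ (((M + N) + 1 : ℕ) : ZMod k) := by
      rw [e1]
      exact Finset.sum_Ioc_succ_top (by omega) _
    have hrec2 : ∑ i ∈ Finset.Ioc M (M + (N + 1)), χ (i : ZMod k) =
        (∑ i ∈ Finset.Ioc M (M + N), χ (i : ZMod k)) + χ (((M + N) + 1 : ℕ) : ZMod k) := by
      rw [show M + (N + 1) = (M + N) + 1 from by omega]
      exact Finset.sum_Ioc_succ_top (by omega) _
    rw [tailTerm, hrec, hrec2]
    have e2 : M + 2 + N = M + 1 + (N + 1) := by omega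
    have e3 : ((M + N) + 1) = M + 1 + N := by omega
    rw [e2, e3]
    ring

lemma FF_eq_LFunction_of_one_lt {k : ℕ} [NeZero k] {χ : DirichletCharacter ℂ k} (hχ : χ ≠ 1)
    {M : ℕ} (hM : 1 ≤ M) {s : ℂ} (hs : 1 < s.re) :
    FF k χ M s = DirichletCharacter.LFunction χ s := by
  have hs0 : 0 < s.re := by linarith
  rw [DirichletCharacter.LFunction_eq_LSeries χ hs]
  have hsum : LSeriesSummable (fun n : ℕ => χ (n : ZMod k)) s :=
    DirichletCharacter.LSeriesSummable_of_one_lt_re χ hs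
  rw [LSeries]
  -- split the series at M+1
  have hsplit := Summable.sum_add_tsum_nat_add (f := LSeries.term (fun n : ℕ => χ (n : ZMod k)) s) (M + 1) hsum
  rw [← hsplit]
  -- head sums agree
  have hhead : ∑ i ∈ Finset.range (M + 1), LSeries.term (fun n : ℕ => χ (n : ZMod k)) s i =
      ∑ n ∈ Finset.Icc 1 M, χ (n : ZMod k) * (n : ℂ) ^ (-s) := by
    have hins : Finset.range (M + 1) = insert 0 (Finset.Icc 1 M) := by
      ext x
      simp only [Finset.mem_range, Finset.mem_insert, Finset.mem_Icc]
      omega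
    rw [hins, Finset.sum_insert (by simp)]
    rw [LSeries.term_zero, zero_add]
    refine Finset.sum_congr rfl fun n hn => ?_
    rw [Finset.mem_Icc] at hn
    rw [LSeries.term_of_ne_zero (by omega), div_eq_mul_inv, cpow_neg]
  -- tail sums agree
  have htail : ∑' j : ℕ, LSeries.term (fun n : ℕ => χ (n : ZMod k)) s (j + (M + 1)) =
      tailF k χ M s := by
    set u : ℕ → ℂ := fun j => ((M + 1 + j : ℕ) : ℂ) ^ (-s) with hu
    have hterm : ∀ j : ℕ, LSeries.term (fun n : ℕ => χ (n : ZMod k)) s (j + (M + 1)) =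
        χ ((M + 1 + j : ℕ) : ZMod k) * u j := by
      intro j
      rw [show j + (M + 1) = M + 1 + j from by omega, LSeries.term_of_ne_zero (by omega),
        div_eq_mul_inv, ← cpow_neg]
    have hsum2 : Summable (fun j : ℕ => LSeries.term (fun n : ℕ => χ (n : ZMod k)) s (j + (M + 1))) :=
      (summable_nat_add_iff (M + 1)).mpr hsum
    have h1 : HasSum (fun j : ℕ => tailTerm k χ M j s) (tailF k χ M s) :=
      ((tail_summable_norm hχ hM hs0).of_norm).hasSum
    have h2 : Filter.Tendsto
        (fun N => ∑ j ∈ Finset.range N, χ ((M + 1 + j : ℕ) : ZMod k) * u j) Filter.atTop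
        (nhds (∑' j : ℕ, LSeries.term (fun n : ℕ => χ (n : ZMod k)) s (j + (M + 1)))) := by
      have := hsum2.hasSum.tendsto_sum_nat
      refine this.congr fun N => Finset.sum_congr rfl fun j _ => (hterm j)
    have h3 : Filter.Tendsto
        (fun N => (∑ i ∈ Finset.Ioc M (M + N), χ (i : ZMod k)) * u N) Filter.atTop (nhds 0) := by
      have hg : Filter.Tendsto (fun N : ℕ => (k : ℝ) * ((M + 1 + N : ℕ) : ℝ) ^ (-s.re))
          Filter.atTop (nhds 0) := by
        have hbase : Filter.Tendsto (fun N : ℕ => ((M + 1 + N : ℕ) : ℝ)) Filter.atTop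
            Filter.atTop := by
          apply Filter.tendsto_atTop_mono (fun N => ?_) tendsto_natCast_atTop_atTop
          exact_mod_cast (by omega : N ≤ M + 1 + N)
        have := ((tendsto_rpow_neg_atTop hs0).comp hbase).const_mul (k : ℝ)
        simpa using this
      refine squeeze_zero_norm (fun N => ?_) hg
      rw [norm_mul]
      refine mul_le_mul (norm_sum_Ioc_le χ hχ _ _) ?_ (norm_nonneg _) (Nat.cast_nonneg _)
      have hnorm : ‖u N‖ = ((M + 1 + N : ℕ) : ℝ) ^ (-s.re) := by
        rw [hu]
        simp only []
        rw [show ((M + 1 + N : ℕ) : ℂ) = (((M + 1 + N : ℕ) : ℝ) : ℂ) from by push_cast; ring]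
        rw [Complex.norm_cpow_eq_rpow_re_of_pos
          (by exact_mod_cast Nat.pos_of_ne_zero (by omega))]
        simp
      rw [hnorm]
    have h4 : Filter.Tendsto (fun N => ∑ j ∈ Finset.range N, tailTerm k χ M j s) Filter.atTop
        (nhds ((∑' j : ℕ, LSeries.term (fun n : ℕ => χ (n : ZMod k)) s (j + (M + 1))) - 0)) := by
      refine (h2.sub h3).congr fun N => ?_
      exact (abel_partial k χ M s N).symm
    rw [sub_zero] at h4
    exact (tendsto_nhds_unique h1.tendsto_sum_nat h4).symm
  rw [FF, hhead, htail]

lemma LFunction_eq_FF {k : ℕ} [NeZero k] {χ : DirichletCharacter ℂ k} (hχ : χ ≠ 1)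
    {M : ℕ} (hM : 1 ≤ M) {s : ℂ} (hs : 1 / 4 < s.re) :
    DirichletCharacter.LFunction χ s = FF k χ M s := by
  set U : Set ℂ := {s : ℂ | 1 / 4 < s.re} with hU
  have hUopen : IsOpen U := isOpen_lt continuous_const Complex.continuous_re
  have hUconn : IsPreconnected U := (convex_halfSpace_re_gt (1 / 4 : ℝ)).isPreconnected
  have hL : AnalyticOnNhd ℂ (DirichletCharacter.LFunction χ) U :=
    (DirichletCharacter.differentiable_LFunction hχ).differentiableOn.analyticOnNhd hUopen
  have hdF : DifferentiableOn ℂ (FF k χ M) U :=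
    fun z hz => (FF_differentiableAt k hχ hM hz).differentiableWithinAt
  have hF : AnalyticOnNhd ℂ (FF k χ M) U := hdF.analyticOnNhd hUopen
  have h2U : (2 : ℂ) ∈ U := by
    show (1 / 4 : ℝ) < (2 : ℂ).re
    norm_num
  have hev : DirichletCharacter.LFunction χ =ᶠ[nhds (2 : ℂ)] FF k χ M := by
    have hopen : IsOpen {s : ℂ | 1 < s.re} := isOpen_lt continuous_const Complex.continuous_re
    have h2 : (2 : ℂ) ∈ {s : ℂ | 1 < s.re} := by
      show (1 : ℝ) < (2 : ℂ).re
      norm_num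
    filter_upwards [hopen.mem_nhds h2] with z hz
    exact (FF_eq_LFunction_of_one_lt hχ hM hz).symm
  exact hL.eqOn_of_preconnected_of_eventuallyEq hF hUconn h2U hev hs


lemma norm_natCast_cpow_neg {n : ℕ} (hn : 0 < n) (s : ℂ) :
    ‖((n : ℕ) : ℂ) ^ (-s)‖ = ((n : ℕ) : ℝ) ^ (-s.re) := by
  rw [show ((n : ℕ) : ℂ) = (((n : ℕ) : ℝ) : ℂ) from by push_cast; ring]
  rw [Complex.norm_cpow_eq_rpow_re_of_pos (by exact_mod_cast hn)]
  simp

lemma FF_norm_le {k : ℕ} [NeZero k] {χ : DirichletCharacter ℂ k} (hχ : χ ≠ 1)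
    {M : ℕ} (hM : 1 ≤ M) {s : ℂ} (hs : 0 < s.re) :
    ‖FF k χ M s‖ ≤ (∑ n ∈ Finset.Icc 1 M, ((n : ℕ) : ℝ) ^ (-s.re)) +
      (k * (‖s‖ / s.re)) * ((M + 1 : ℕ) : ℝ) ^ (-s.re) := by
  refine (norm_add_le _ _).trans (add_le_add ?_ ?_)
  · refine (norm_sum_le _ _).trans ?_
    refine Finset.sum_le_sum fun n hn => ?_
    rw [Finset.mem_Icc] at hn
    rw [norm_mul, norm_natCast_cpow_neg (by omega) s]
    calc ‖χ (n : ZMod k)‖ * ((n : ℕ) : ℝ) ^ (-s.re)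
        ≤ 1 * ((n : ℕ) : ℝ) ^ (-s.re) :=
          mul_le_mul_of_nonneg_right (χ.norm_le_one _) (Real.rpow_nonneg (Nat.cast_nonneg _) _)
      _ = ((n : ℕ) : ℝ) ^ (-s.re) := one_mul _
  · exact (norm_tsum_le_tsum_norm (tail_summable_norm hχ hM hs)).trans
      (tail_tsum_norm_le hχ hM hs)

lemma main_estimate (c : ℝ) (hc : 0 < c) {k : ℕ} [NeZero k] {χ : DirichletCharacter ℂ k}
    (hχ : χ ≠ 1) {T : ℝ} (hT : 3 ≤ T) (hbig : Real.exp (2 * c) ≤ (k : ℝ) * T) {s : ℂ}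
    (hre : |s.re - 1| ≤ c / Real.log ((k : ℝ) * T)) (him : |s.im| ≤ T) :
    ‖DirichletCharacter.LFunction χ s‖ ≤
      (2 * Real.exp c + 2 * (2 + c) * Real.exp c) * Real.log ((k : ℝ) * T) := by
  have hk1 : (1 : ℝ) ≤ (k : ℝ) := by
    exact_mod_cast Nat.pos_of_ne_zero (NeZero.ne k)
  have hkT3 : (3 : ℝ) ≤ (k : ℝ) * T := by nlinarith
  have hkT0 : (0 : ℝ) < (k : ℝ) * T := by linarith
  set L : ℝ := Real.log ((k : ℝ) * T) with hL
  have hlog1 : 1 ≤ L := by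
    have h3 : (1 : ℝ) < Real.log 3 := by
      rw [Real.lt_log_iff_exp_lt (by norm_num)]
      exact lt_of_lt_of_le Real.exp_one_lt_d9 (by norm_num)
    have := Real.log_le_log (by norm_num : (0:ℝ) < 3) hkT3
    linarith
  have hlog2c : 2 * c ≤ L := (Real.le_log_iff_exp_le hkT0).mpr hbig
  have hL0 : 0 < L := by linarith
  obtain ⟨hre1, hre2⟩ := abs_le.mp hre
  have hfrac : c / L ≤ 1 / 2 := by
    rw [div_le_div_iff₀ hL0 (by norm_num)]
    linarith
  have hsighalf : 1 / 2 ≤ s.re := by linarith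
  have hσ0 : 0 < s.re := by linarith
  set M : ℕ := ⌊(k : ℝ) * T⌋₊ with hMdef
  have hM1 : 1 ≤ M := Nat.le_floor (by exact_mod_cast by linarith)
  have hMle : (M : ℝ) ≤ (k : ℝ) * T := Nat.floor_le hkT0.le
  have hMgt : (k : ℝ) * T < (M : ℝ) + 1 := Nat.lt_floor_add_one _
  -- the common sub-bound : y ^ (1 - s.re) ≤ exp c for 1 ≤ y ≤ kT
  have hpow : ∀ y : ℝ, 1 ≤ y → y ≤ (k : ℝ) * T → y ^ (1 - s.re) ≤ Real.exp c := by
    intro y hy1 hy2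
    rcases le_or_gt (1 - s.re) 0 with hcase | hcase
    · exact (Real.rpow_le_one_of_one_le_of_nonpos hy1 hcase).trans (Real.one_le_exp hc.le)
    · have h1 : y ^ (1 - s.re) ≤ ((k : ℝ) * T) ^ (1 - s.re) :=
        Real.rpow_le_rpow (by linarith) hy2 hcase.le
      have h2 : ((k : ℝ) * T) ^ (1 - s.re) = Real.exp (Real.log ((k : ℝ) * T) * (1 - s.re)) :=
        Real.rpow_def_of_pos hkT0 _
      have h3 : L * (1 - s.re) ≤ c := by
        have : 1 - s.re ≤ c / L := by linarith
        calc L * (1 - s.re) ≤ L * (c / L) := by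
              exact mul_le_mul_of_nonneg_left this hL0.le
          _ = c := by field_simp
      calc y ^ (1 - s.re) ≤ ((k : ℝ) * T) ^ (1 - s.re) := h1
        _ = Real.exp (Real.log ((k : ℝ) * T) * (1 - s.re)) := h2
        _ ≤ Real.exp c := Real.exp_le_exp.mpr h3
  rw [LFunction_eq_FF hχ hM1 (by linarith : 1 / 4 < s.re)]
  refine (FF_norm_le hχ hM1 hσ0).trans ?_
  have hhead : (∑ n ∈ Finset.Icc 1 M, ((n : ℕ) : ℝ) ^ (-s.re)) ≤ 2 * Real.exp c * L := by
    have hterm : ∀ n ∈ Finset.Icc 1 M, ((n : ℕ) : ℝ) ^ (-s.re) ≤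
        Real.exp c * ((n : ℕ) : ℝ)⁻¹ := by
      intro n hn
      rw [Finset.mem_Icc] at hn
      have hn1 : (1 : ℝ) ≤ (n : ℝ) := by exact_mod_cast hn.1
      have hn0 : (0 : ℝ) < (n : ℝ) := by linarith
      have hnkT : (n : ℝ) ≤ (k : ℝ) * T := by
        have : (n : ℝ) ≤ (M : ℝ) := by exact_mod_cast hn.2
        linarith
      have hsplit : ((n : ℕ) : ℝ) ^ (-s.re) = (n : ℝ) ^ (1 - s.re) * (n : ℝ)⁻¹ := by
        rw [show -s.re = (1 - s.re) + (-1) from by ring, Real.rpow_add hn0, Real.rpow_neg_one]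
      rw [hsplit]
      exact mul_le_mul_of_nonneg_right (hpow _ hn1 hnkT) (by positivity)
    have hharm : (∑ n ∈ Finset.Icc 1 M, ((n : ℕ) : ℝ)⁻¹) ≤ 1 + Real.log M := by
      have h1 : ((harmonic M : ℚ) : ℝ) = ∑ n ∈ Finset.Icc 1 M, ((n : ℕ) : ℝ)⁻¹ := by
        rw [harmonic_eq_sum_Icc]
        push_cast
        rfl
      have h2 := harmonic_le_one_add_log M
      rw [← h1]
      exact_mod_cast h2
    have hlogM : Real.log M ≤ L := Real.log_le_log (by exact_mod_cast hM1) hMle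
    calc (∑ n ∈ Finset.Icc 1 M, ((n : ℕ) : ℝ) ^ (-s.re))
        ≤ ∑ n ∈ Finset.Icc 1 M, Real.exp c * ((n : ℕ) : ℝ)⁻¹ := Finset.sum_le_sum hterm
      _ = Real.exp c * ∑ n ∈ Finset.Icc 1 M, ((n : ℕ) : ℝ)⁻¹ := by rw [Finset.mul_sum]
      _ ≤ Real.exp c * (1 + L) := by
          refine mul_le_mul_of_nonneg_left ?_ (Real.exp_pos c).le
          linarith
      _ ≤ Real.exp c * (2 * L) := by
          refine mul_le_mul_of_nonneg_left (by linarith) (Real.exp_pos c).le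
      _ = 2 * Real.exp c * L := by ring
  have htail : (k * (‖s‖ / s.re)) * ((M + 1 : ℕ) : ℝ) ^ (-s.re) ≤
      2 * (2 + c) * Real.exp c * L := by
    have hA : ((M + 1 : ℕ) : ℝ) ^ (-s.re) ≤ Real.exp c * ((k : ℝ) * T)⁻¹ := by
      have h1 : ((M + 1 : ℕ) : ℝ) ^ (-s.re) ≤ ((k : ℝ) * T) ^ (-s.re) := by
        apply rpow_neg_base_mono hkT0 _ hσ0.le
        push_cast
        linarith
      have h2 : ((k : ℝ) * T) ^ (-s.re) = ((k : ℝ) * T) ^ (1 - s.re) * ((k : ℝ) * T)⁻¹ := by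
        rw [show -s.re = (1 - s.re) + (-1) from by ring, Real.rpow_add hkT0, Real.rpow_neg_one]
      rw [h2] at h1
      exact h1.trans (mul_le_mul_of_nonneg_right (hpow _ (by linarith) le_rfl) (by positivity))
    have hss : ‖s‖ / s.re ≤ 2 * ((2 + c) * T) := by
      have h1 : ‖s‖ ≤ |s.re| + |s.im| := by
        exact Complex.norm_le_abs_re_add_abs_im s
      have h2 : |s.re| ≤ 1 + c := by
        rw [abs_of_pos hσ0]
        have : c / L ≤ c := by
          rw [div_le_iff₀ hL0]
          nlinarith
        linarith
      have h3 : ‖s‖ ≤ (2 + c) * T := by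
        nlinarith [mul_nonneg (by linarith : (0:ℝ) ≤ 1 + c) (by linarith : (0:ℝ) ≤ T - 1)]
      rw [div_le_iff₀ hσ0]
      have hpos : (0:ℝ) ≤ (2 + c) * T := by positivity
      nlinarith [mul_nonneg hpos (by linarith : (0:ℝ) ≤ 2 * s.re - 1)]
    calc (k * (‖s‖ / s.re)) * ((M + 1 : ℕ) : ℝ) ^ (-s.re)
        ≤ ((k : ℝ) * (2 * ((2 + c) * T))) * (Real.exp c * ((k : ℝ) * T)⁻¹) := by
          refine mul_le_mul (mul_le_mul_of_nonneg_left hss (by positivity)) hA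
            (Real.rpow_nonneg (Nat.cast_nonneg _) _) ?_
          positivity
      _ = 2 * (2 + c) * Real.exp c * (((k : ℝ) * T) * ((k : ℝ) * T)⁻¹) := by ring
      _ = 2 * (2 + c) * Real.exp c := by
          rw [mul_inv_cancel₀ (by positivity), mul_one]
      _ ≤ 2 * (2 + c) * Real.exp c * L := by
          nth_rewrite 1 [← mul_one (2 * (2 + c) * Real.exp c)]
          exact mul_le_mul_of_nonneg_left hlog1 (by positivity)
  calc (∑ n ∈ Finset.Icc 1 M, ((n : ℕ) : ℝ) ^ (-s.re)) +
        (k * (‖s‖ / s.re)) * ((M + 1 : ℕ) : ℝ) ^ (-s.re)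
      ≤ 2 * Real.exp c * L + 2 * (2 + c) * Real.exp c * L := add_le_add hhead htail
    _ = (2 * Real.exp c + 2 * (2 + c) * Real.exp c) * L := by ring



end LogBdAux

/-- If `χ` is a non-principal Dirichlet character modulo `k` and `c > 0`, there is a constant
`C` (depending only on `c`) such that for all `T ≥ 3` and all `s = σ + it` with
`|σ − 1| ≤ c / log(kT)` and `|t| ≤ T`, one has `|L(s, χ)| ≤ C·log(kT)`. -/
theorem LFunction_log_bound (c : ℝ) (hc : 0 < c) :
    ∃ C : ℝ, 0 < C ∧ ∀ (k : ℕ) [NeZero k] (χ : DirichletCharacter ℂ k), χ ≠ 1 →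
      ∀ T : ℝ, 3 ≤ T → ∀ s : ℂ,
        |s.re - 1| ≤ c / Real.log (k * T) → |s.im| ≤ T →
        ‖DirichletCharacter.LFunction χ s‖ ≤ C * Real.log (k * T) := by
  classical
  -- compact-region data
  set R : ℝ := 1 + c + Real.exp (2 * c) with hR
  set K : Set ℂ := Metric.closedBall 0 R with hK
  set B : ℕ := ⌈Real.exp (2 * c)⌉₊ with hB
  -- a bound for each modulus
  have hcomp : ∀ m : ℕ, ∃ Cm : ℝ, 0 ≤ Cm ∧ ∀ (_ : NeZero m) (χ : DirichletCharacter ℂ m),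
      χ ≠ 1 → ∀ s ∈ K, ‖DirichletCharacter.LFunction χ s‖ ≤ Cm := by
    intro m
    by_cases hm0 : m = 0
    · exact ⟨0, le_rfl, fun hm => absurd (hm0 ▸ hm.out) (by simp [hm0])⟩
    · haveI : NeZero m := ⟨hm0⟩
      have step : ∀ χ : DirichletCharacter ℂ m, ∃ Cχ : ℝ, 0 ≤ Cχ ∧
          (χ ≠ 1 → ∀ s ∈ K, ‖DirichletCharacter.LFunction χ s‖ ≤ Cχ) := by
        intro χ
        by_cases hχ : χ = 1
        · exact ⟨0, le_rfl, fun h => absurd hχ h⟩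
        · obtain ⟨Cb, hCb⟩ := (isCompact_closedBall (0 : ℂ) R).exists_bound_of_continuousOn
            ((DirichletCharacter.differentiable_LFunction hχ).continuous.continuousOn)
          exact ⟨max Cb 0, le_max_right _ _, fun _ s hs => (hCb s hs).trans (le_max_left _ _)⟩
      haveI : Finite (DirichletCharacter ℂ m) := inferInstance
      haveI := Fintype.ofFinite (DirichletCharacter ℂ m)
      choose f hf0 hf using step
      refine ⟨∑ χ : DirichletCharacter ℂ m, f χ,
        Finset.sum_nonneg fun χ _ => hf0 χ, fun _ χ hχ s hs => (hf χ hχ s hs).trans ?_⟩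
      exact Finset.single_le_sum (fun χ _ => hf0 χ) (Finset.mem_univ χ)
  choose g hg0 hg using hcomp
  set C₂ : ℝ := ∑ m ∈ Finset.range (B + 1), g m with hC₂
  have hC₂0 : 0 ≤ C₂ := Finset.sum_nonneg fun m _ => hg0 m
  set C₁ : ℝ := 2 * Real.exp c + 2 * (2 + c) * Real.exp c with hC₁
  have hC₁0 : 0 < C₁ := by positivity
  refine ⟨C₁ + C₂, by positivity, ?_⟩
  intro k _ χ hχ T hT s hre him
  have hk1 : (1 : ℝ) ≤ (k : ℝ) := by exact_mod_cast Nat.pos_of_ne_zero (NeZero.ne k)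
  have hkT3 : (3 : ℝ) ≤ (k : ℝ) * T := by nlinarith
  have hkT0 : (0 : ℝ) < (k : ℝ) * T := by linarith
  have hlog1 : 1 ≤ Real.log ((k : ℝ) * T) := by
    have h3 : (1 : ℝ) < Real.log 3 := by
      rw [Real.lt_log_iff_exp_lt (by norm_num)]
      exact lt_of_lt_of_le Real.exp_one_lt_d9 (by norm_num)
    have := Real.log_le_log (by norm_num : (0:ℝ) < 3) hkT3
    linarith
  rcases le_or_gt (Real.exp (2 * c)) ((k : ℝ) * T) with hbig | hsmall
  · -- main case
    have := LogBdAux.main_estimate c hc hχ hT hbig hre him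
    calc ‖DirichletCharacter.LFunction χ s‖ ≤ C₁ * Real.log ((k : ℝ) * T) := this
      _ ≤ (C₁ + C₂) * Real.log ((k : ℝ) * T) := by nlinarith
  · -- compact case
    have hkB : k ≤ B := by
      have h1 : (k : ℝ) ≤ (k : ℝ) * T := by nlinarith
      have h2 : (k : ℝ) < Real.exp (2 * c) := lt_of_le_of_lt h1 hsmall
      have h3 : (k : ℝ) ≤ (B : ℝ) := h2.le.trans (Nat.le_ceil _)
      exact_mod_cast h3
    have hsK : s ∈ K := by
      rw [hK, Metric.mem_closedBall, dist_zero_right]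
      have h1 : ‖s‖ ≤ |s.re| + |s.im| := by
        exact Complex.norm_le_abs_re_add_abs_im s
      have h2 : |s.re| ≤ 1 + c := by
        have hcL : c / Real.log ((k : ℝ) * T) ≤ c := by
          rw [div_le_iff₀ (by linarith)]
          nlinarith
        calc |s.re| ≤ |s.re - 1| + 1 := by
              have := abs_sub_abs_le_abs_sub s.re 1
              simp only [abs_one] at this
              linarith [abs_abs_sub_abs_le_abs_sub s.re 1]
          _ ≤ 1 + c := by linarith
      have h3 : |s.im| ≤ Real.exp (2 * c) := by
        have hTkT : T ≤ (k : ℝ) * T := by nlinarith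
        linarith
      rw [hR]
      linarith
    have := hg k ‹NeZero k› χ hχ s hsK
    have hgC₂ : g k ≤ C₂ :=
      Finset.single_le_sum (f := fun m => g m) (fun m _ => hg0 m)
        (Finset.mem_range.mpr (by omega))
    calc ‖DirichletCharacter.LFunction χ s‖ ≤ C₂ := this.trans hgC₂
      _ ≤ C₂ * Real.log ((k : ℝ) * T) := by nlinarith
      _ ≤ (C₁ + C₂) * Real.log ((k : ℝ) * T) := by nlinarith
end

section
/- Let p be a prime, let t be an integer with 1 ≤ t ≤ (p−1)/2, and set d_{t,p}(1) = (Σ_{j≥0} e(w(p^j)t/p)·p^{−j})^{−1}, where e(z) = exp(2πiz) and w(p^0) = w(1) = 0, w(p) = 1. Then there is an absolute constant C such that |1 − (p/(p−1))·d_{t,p}(1)| ≤ C·t/p², and there are absolute constants c > 0 and p₀ such that for t = 1 and p ≥ p₀ one has |1 − (p/(p−1))·d_{1,p}(1)| ≥ c/p². -/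
noncomputable def eTwoPi (x : ℝ) : ℂ := Complex.exp (2 * Real.pi * Complex.I * x)

noncomputable def dtp (w : ℕ → ℕ) (p : ℕ) (t : ℕ) : ℂ :=
  (∑' j : ℕ, eTwoPi ((w (p ^ j) : ℝ) * t / p) / (p : ℂ) ^ j)⁻¹

lemma eTwoPi_eq (x : ℝ) : eTwoPi x = Complex.exp (((2 * Real.pi * x : ℝ) : ℂ) * Complex.I) := by
  unfold eTwoPi; push_cast; ring_nf

lemma eTwoPi_zero : eTwoPi 0 = 1 := by unfold eTwoPi; simp

lemma norm_eTwoPi (x : ℝ) : ‖eTwoPi x‖ = 1 := by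
  rw [eTwoPi_eq]; exact Complex.norm_exp_ofReal_mul_I _

lemma norm_exp_I_sub_one_le (θ : ℝ) : ‖Complex.exp ((θ : ℂ) * Complex.I) - 1‖ ≤ |θ| := by
  have h : Complex.exp ((θ : ℂ) * Complex.I) - 1
      = ((Real.cos θ - 1 : ℝ) : ℂ) + ((Real.sin θ : ℝ) : ℂ) * Complex.I := by
    rw [Complex.exp_mul_I]
    push_cast [← Complex.ofReal_cos, ← Complex.ofReal_sin]
    ring
  have h2 : ‖Complex.exp ((θ : ℂ) * Complex.I) - 1‖ ^ 2 ≤ |θ| ^ 2 := by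
    rw [h, Complex.sq_norm, Complex.normSq_add_mul_I, sq_abs]
    have hc := Real.one_sub_sq_div_two_le_cos (x := θ)
    nlinarith [Real.sin_sq_add_cos_sq θ]
  have := Real.sqrt_le_sqrt h2
  simpa [Real.sqrt_sq (norm_nonneg _), Real.sqrt_sq_eq_abs] using this

lemma norm_eTwoPi_sub_one_le (x : ℝ) (hx : 0 ≤ x) :
    ‖eTwoPi x - 1‖ ≤ 2 * Real.pi * x := by
  rw [eTwoPi_eq]
  have := norm_exp_I_sub_one_le (2 * Real.pi * x)
  rwa [abs_of_nonneg (by positivity)] at this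

lemma eTwoPi_im (x : ℝ) : (eTwoPi x).im = Real.sin (2 * Real.pi * x) := by
  rw [eTwoPi_eq, Complex.exp_ofReal_mul_I_im]

lemma summable_aux {p : ℕ} (hp : 2 ≤ p) (a : ℕ → ℝ) :
    Summable (fun j : ℕ => eTwoPi (a j) / (p : ℂ) ^ j) := by
  apply Summable.of_norm
  have hp0 : (0:ℝ) < p := by positivity
  have : (fun j : ℕ => ‖eTwoPi (a j) / (p : ℂ) ^ j‖) = fun j => (1 / (p:ℝ)) ^ j := by
    funext j
    rw [norm_div, norm_eTwoPi, norm_pow]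
    simp [Complex.norm_natCast, one_div, inv_pow]
  rw [this]
  apply summable_geometric_of_lt_one (by positivity)
  rw [div_lt_one hp0]
  exact_mod_cast by omega

lemma tsum_tail_bound {p : ℕ} (hp : 2 ≤ p) (a : ℕ → ℝ) :
    ‖∑' j : ℕ, eTwoPi (a (j+2)) / (p : ℂ) ^ (j+2)‖ ≤ 1 / ((p:ℝ) * ((p:ℝ) - 1)) := by
  have hp0 : (0:ℝ) < p := by positivity
  have hp1 : (1:ℝ) < p := by exact_mod_cast by omega
  have hlt : 1 / (p:ℝ) < 1 := by rw [div_lt_one hp0]; exact hp1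
  have hnn : (0:ℝ) ≤ 1 / (p:ℝ) := by positivity
  calc ‖∑' j : ℕ, eTwoPi (a (j+2)) / (p : ℂ) ^ (j+2)‖
      ≤ ∑' j : ℕ, ‖eTwoPi (a (j+2)) / (p : ℂ) ^ (j+2)‖ := norm_tsum_le_tsum_norm (by
        apply Summable.of_nonneg_of_le (fun j => norm_nonneg _) (fun j => le_of_eq ?_)
          ((summable_geometric_of_lt_one hnn hlt).mul_left ((1/(p:ℝ))^2))
        rw [norm_div, norm_eTwoPi, norm_pow]
        simp [Complex.norm_natCast, one_div, inv_pow, pow_add])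
    _ = ∑' j : ℕ, (1/(p:ℝ))^2 * (1/(p:ℝ))^j := by
        congr 1; funext j
        rw [norm_div, norm_eTwoPi, norm_pow]
        simp [Complex.norm_natCast, one_div, inv_pow, pow_add]
    _ = (1/(p:ℝ))^2 * (1 - 1/(p:ℝ))⁻¹ := by
        rw [tsum_mul_left, tsum_geometric_of_lt_one hnn hlt]
    _ = 1 / ((p:ℝ) * ((p:ℝ) - 1)) := by
        have h1 : (p:ℝ) - 1 ≠ 0 := by nlinarith
        field_simp

lemma core (w : ℕ → ℕ)
    (hadd : ∀ m n : ℕ, 1 ≤ m → 1 ≤ n → Nat.Coprime m n → w (m * n) = w m + w n)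
    (hq : ∀ q : ℕ, Nat.Prime q → w q = 1)
    (p : ℕ) (hp : p.Prime) (hp3 : 3 ≤ p) (t : ℕ) :
    ∃ S R : ℂ,
      ‖R‖ ≤ 1 / ((p:ℝ) * ((p:ℝ) - 1)) ∧
      (1:ℝ)/2 ≤ ‖S‖ ∧ ‖S‖ ≤ 2 ∧
      1 - ((p : ℂ) / ((p : ℂ) - 1)) * dtp w p t
        = ((eTwoPi ((t:ℝ)/p) - 1) / (p:ℂ) - 1 / ((p:ℂ) * ((p:ℂ) - 1)) + R) / S := by
  have hp2 : 2 ≤ p := hp.two_le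
  have hpR : (3:ℝ) ≤ p := by exact_mod_cast hp3
  have hpR0 : (0:ℝ) < p := by linarith
  set a : ℕ → ℝ := fun j => (w (p ^ j) : ℝ) * t / p with ha
  set S : ℂ := ∑' j : ℕ, eTwoPi (a j) / (p : ℂ) ^ j with hS
  set R : ℂ := ∑' j : ℕ, eTwoPi (a (j+2)) / (p : ℂ) ^ (j+2) with hR
  have hw1 : w 1 = 0 := by
    have h := hadd 1 1 le_rfl le_rfl (Nat.coprime_one_right 1)
    simp at h
    omega
  have hwp : w p = 1 := hq p hp
  -- split the sum
  have hsum := summable_aux hp2 a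
  have hsum1 : Summable (fun j : ℕ => eTwoPi (a (j+1)) / (p : ℂ) ^ (j+1)) := by
    have := hsum.comp_injective (add_left_injective 1)
    exact this
  have hsplit : S = 1 + eTwoPi ((t:ℝ)/p) / (p:ℂ) + R := by
    rw [hS, hsum.tsum_eq_zero_add, hsum1.tsum_eq_zero_add]
    have h0 : eTwoPi (a 0) / (p:ℂ) ^ 0 = 1 := by
      have : a 0 = 0 := by simp [ha, hw1]
      rw [this, eTwoPi_zero]; simp
    have h1 : eTwoPi (a 1) / (p:ℂ) ^ 1 = eTwoPi ((t:ℝ)/p) / (p:ℂ) := by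
      have : a 1 = (t:ℝ)/p := by simp [ha, hwp]
      rw [this]; simp
    rw [h0, h1, add_assoc]
  have hRb : ‖R‖ ≤ 1 / ((p:ℝ) * ((p:ℝ) - 1)) := tsum_tail_bound hp2 a
  have hRb' : ‖R‖ ≤ 1/6 := hRb.trans (by
    rw [div_le_div_iff₀ (by nlinarith) (by norm_num)]; nlinarith)
  have hz : ‖eTwoPi ((t:ℝ)/p) / (p:ℂ)‖ ≤ 1/3 := by
    rw [norm_div, norm_eTwoPi, Complex.norm_natCast]
    rw [div_le_div_iff₀ hpR0 (by norm_num)]; linarith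
  have hSlow : (1:ℝ)/2 ≤ ‖S‖ := by
    set x : ℂ := eTwoPi ((t:ℝ)/p) / (p:ℂ) + R with hx
    have h1 : S = 1 + x := by rw [hsplit]; ring
    have htri : ‖x‖ ≤ 1/2 := (norm_add_le _ _).trans (by linarith)
    have key : ‖(1:ℂ)‖ ≤ ‖1 + x‖ + ‖x‖ := by
      have h2 : (1:ℂ) = (1 + x) - x := by ring
      calc ‖(1:ℂ)‖ = ‖(1 + x) - x‖ := by rw [← h2]
        _ ≤ ‖1 + x‖ + ‖x‖ := norm_sub_le _ _
    rw [h1]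
    rw [norm_one] at key
    linarith
  have hSup : ‖S‖ ≤ 2 := by
    rw [hsplit]
    calc ‖1 + eTwoPi ((t:ℝ)/p) / (p:ℂ) + R‖
        ≤ ‖(1:ℂ)‖ + ‖eTwoPi ((t:ℝ)/p) / (p:ℂ)‖ + ‖R‖ := norm_add₃_le
      _ ≤ 1 + 1/3 + 1/6 := by rw [norm_one]; gcongr
      _ ≤ 2 := by norm_num
  refine ⟨S, R, hRb, hSlow, hSup, ?_⟩
  have hS0 : S ≠ 0 := by
    intro h; rw [h] at hSlow; simp at hSlow; linarith
  have hpC : (p:ℂ) ≠ 0 := by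
    exact_mod_cast Nat.cast_ne_zero.mpr (by omega)
  have hpC1 : (p:ℂ) - 1 ≠ 0 := by
    rw [sub_ne_zero]
    exact_mod_cast Nat.cast_injective.ne (show p ≠ 1 by omega) |>.elim
  rw [dtp]
  have hdtp : (∑' j : ℕ, eTwoPi ((w (p ^ j) : ℝ) * t / p) / (p : ℂ) ^ j) = S := rfl
  rw [hdtp]
  have hSQ : S - (p : ℂ) / ((p : ℂ) - 1)
      = (eTwoPi ((t:ℝ)/p) - 1) / (p:ℂ) - 1 / ((p:ℂ) * ((p:ℂ) - 1)) + R := by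
    rw [hsplit]
    field_simp
    ring
  rw [← hSQ, sub_div, div_self hS0]
  ring

/-- There is an absolute constant `C` with `|1 − (p/(p−1))·d_{t,p}(1)| ≤ C·t/p²` for all primes
`p` and integers `1 ≤ t ≤ (p−1)/2`, and there are absolute constants `c > 0`, `p₀` such that
`|1 − (p/(p−1))·d_{1,p}(1)| ≥ c/p²` for all primes `p ≥ p₀`. -/
theorem dtp_bounds :
    (∃ C : ℝ, 0 < C ∧
      ∀ (w : ℕ → ℕ),
        (∀ m n : ℕ, 1 ≤ m → 1 ≤ n → Nat.Coprime m n → w (m * n) = w m + w n) →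
        (∀ q : ℕ, Nat.Prime q → w q = 1) →
        ∀ p : ℕ, p.Prime → ∀ t : ℕ, 1 ≤ t → t ≤ (p - 1) / 2 →
          ‖1 - ((p : ℂ) / ((p : ℂ) - 1)) * dtp w p t‖ ≤ C * t / (p : ℝ) ^ 2) ∧
    (∃ c : ℝ, 0 < c ∧ ∃ p₀ : ℕ,
      ∀ (w : ℕ → ℕ),
        (∀ m n : ℕ, 1 ≤ m → 1 ≤ n → Nat.Coprime m n → w (m * n) = w m + w n) →
        (∀ q : ℕ, Nat.Prime q → w q = 1) →
        ∀ p : ℕ, p.Prime → p₀ ≤ p →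
          c / (p : ℝ) ^ 2 ≤ ‖1 - ((p : ℂ) / ((p : ℂ) - 1)) * dtp w p 1‖) := by
  have hπpos := Real.pi_pos
  have hπlt : Real.pi < 3.15 := Real.pi_lt_d2
  constructor
  · refine ⟨20, by norm_num, fun w hadd hq p hp t ht1 ht2 => ?_⟩
    have hp3 : 3 ≤ p := by
      have := hp.two_le; omega
    obtain ⟨S, R, hRb, hSlow, hSup, heq⟩ := core w hadd hq p hp hp3 t
    have hPR : (3:ℝ) ≤ (p:ℝ) := by exact_mod_cast hp3
    have hP0 : (0:ℝ) < (p:ℝ) := by linarith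
    have hT1 : (1:ℝ) ≤ (t:ℝ) := by exact_mod_cast ht1
    have hPP : (0:ℝ) < (p:ℝ) * ((p:ℝ) - 1) := by nlinarith
    rw [heq, norm_div]
    have hA : ‖(eTwoPi ((t:ℝ)/(p:ℝ)) - 1) / (p:ℂ)‖ ≤ 2 * Real.pi * t / (p:ℝ) ^ 2 := by
      rw [norm_div, Complex.norm_natCast]
      have h := norm_eTwoPi_sub_one_le ((t:ℝ)/(p:ℝ)) (by positivity)
      calc ‖eTwoPi ((t:ℝ)/(p:ℝ)) - 1‖ / (p:ℝ) ≤ (2 * Real.pi * ((t:ℝ)/(p:ℝ))) / (p:ℝ) := by gcongr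
        _ = 2 * Real.pi * t / (p:ℝ) ^ 2 := by field_simp
    have hB : ‖(1:ℂ) / ((p:ℂ) * ((p:ℂ) - 1))‖ = 1 / ((p:ℝ) * ((p:ℝ) - 1)) := by
      have hcast : (p:ℂ) * ((p:ℂ) - 1) = ((((p:ℝ) * ((p:ℝ) - 1)) : ℝ) : ℂ) := by push_cast; ring
      rw [norm_div, norm_one, hcast, Complex.norm_real, Real.norm_eq_abs, abs_of_pos hPP]
    have hN : ‖(eTwoPi ((t:ℝ)/(p:ℝ)) - 1) / (p:ℂ) - 1 / ((p:ℂ) * ((p:ℂ) - 1)) + R‖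
        ≤ 2 * Real.pi * t / (p:ℝ) ^ 2 + 1 / ((p:ℝ) * ((p:ℝ) - 1)) + 1 / ((p:ℝ) * ((p:ℝ) - 1)) := by
      calc ‖(eTwoPi ((t:ℝ)/(p:ℝ)) - 1) / (p:ℂ) - 1 / ((p:ℂ) * ((p:ℂ) - 1)) + R‖
          ≤ ‖(eTwoPi ((t:ℝ)/(p:ℝ)) - 1) / (p:ℂ) - 1 / ((p:ℂ) * ((p:ℂ) - 1))‖ + ‖R‖ :=
            norm_add_le _ _
        _ ≤ (‖(eTwoPi ((t:ℝ)/(p:ℝ)) - 1) / (p:ℂ)‖ + ‖(1:ℂ) / ((p:ℂ) * ((p:ℂ) - 1))‖) + ‖R‖ := by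
            gcongr; exact norm_sub_le _ _
        _ ≤ 2 * Real.pi * t / (p:ℝ) ^ 2 + 1 / ((p:ℝ) * ((p:ℝ) - 1)) + 1 / ((p:ℝ) * ((p:ℝ) - 1)) := by
            rw [hB]; gcongr
    have hS0 : (0:ℝ) < ‖S‖ := by linarith
    have h1 : 1 / ((p:ℝ) * ((p:ℝ) - 1)) ≤ 1.5 * t / (p:ℝ) ^ 2 := by
      rw [div_le_div_iff₀ hPP (by positivity)]
      nlinarith [mul_le_mul_of_nonneg_right hT1 (le_of_lt hPP),
        mul_le_mul_of_nonneg_right hPR (le_of_lt hP0)]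
    have h2 : 2 * Real.pi * t / (p:ℝ) ^ 2 ≤ 6.3 * t / (p:ℝ) ^ 2 := by
      gcongr
      linarith
    have hpos : (0:ℝ) ≤ (t:ℝ) / (p:ℝ) ^ 2 := by positivity
    calc ‖(eTwoPi ((t:ℝ)/(p:ℝ)) - 1) / (p:ℂ) - 1 / ((p:ℂ) * ((p:ℂ) - 1)) + R‖ / ‖S‖
        ≤ (2 * Real.pi * t / (p:ℝ) ^ 2 + 1 / ((p:ℝ) * ((p:ℝ) - 1)) + 1 / ((p:ℝ) * ((p:ℝ) - 1)))
            / (1/2) := by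
          gcongr
      _ = 2 * (2 * Real.pi * t / (p:ℝ) ^ 2 + 1 / ((p:ℝ) * ((p:ℝ) - 1))
            + 1 / ((p:ℝ) * ((p:ℝ) - 1))) := by ring
      _ ≤ 20 * t / (p:ℝ) ^ 2 := by
          ring_nf at h1 h2 hpos ⊢
          linarith
  · refine ⟨1, by norm_num, 5, fun w hadd hq p hp hp5 => ?_⟩
    have hp3 : 3 ≤ p := by omega
    obtain ⟨S, R, hRb, hSlow, hSup, heq⟩ := core w hadd hq p hp hp3 1
    have hPR : (5:ℝ) ≤ (p:ℝ) := by exact_mod_cast hp5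
    have hP0 : (0:ℝ) < (p:ℝ) := by linarith
    have hPP : (0:ℝ) < (p:ℝ) * ((p:ℝ) - 1) := by nlinarith
    rw [heq, norm_div]
    set z := eTwoPi (((1:ℕ):ℝ)/(p:ℝ)) with hz
    set N := (z - 1) / (p:ℂ) - 1 / ((p:ℂ) * ((p:ℂ) - 1)) + R with hNdef
    have hsin : 4 / (p:ℝ) ≤ Real.sin (2 * Real.pi * (((1:ℕ):ℝ)/(p:ℝ))) := by
      have harg : 2 * Real.pi * (((1:ℕ):ℝ)/(p:ℝ)) = 2 * Real.pi / (p:ℝ) := by push_cast; ring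
      rw [harg]
      have h1 : 0 ≤ 2 * Real.pi / (p:ℝ) := by positivity
      have h2 : 2 * Real.pi / (p:ℝ) ≤ Real.pi / 2 := by
        rw [div_le_div_iff₀ hP0 (by norm_num)]
        nlinarith
      have h3 := Real.mul_le_sin h1 h2
      calc 4 / (p:ℝ) = 2 / Real.pi * (2 * Real.pi / (p:ℝ)) := by field_simp; ring
        _ ≤ Real.sin (2 * Real.pi / (p:ℝ)) := h3
    have hzim : z.im = Real.sin (2 * Real.pi * (((1:ℕ):ℝ)/(p:ℝ))) := eTwoPi_im _
    have hNim : N.im = z.im / (p:ℝ) + R.im := by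
      have h1 : N = (z - 1) / (((p:ℝ):ℝ):ℂ) - (((1 / ((p:ℝ) * ((p:ℝ) - 1))):ℝ):ℂ) + R := by
        rw [hNdef]
        push_cast [ne_of_gt hP0]
        ring
      rw [h1]
      simp [Complex.add_im, Complex.sub_im, Complex.div_ofReal_im, Complex.ofReal_im,
        Complex.one_im]
    have hRim : -(1 / ((p:ℝ) * ((p:ℝ) - 1))) ≤ R.im := by
      have h1 : |R.im| ≤ ‖R‖ := Complex.abs_im_le_norm R
      have h2 := neg_abs_le R.im
      linarith
    have hRsmall : 1 / ((p:ℝ) * ((p:ℝ) - 1)) ≤ 1.5 / (p:ℝ) ^ 2 := by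
      rw [div_le_div_iff₀ hPP (by positivity)]
      nlinarith [mul_le_mul_of_nonneg_right hPR (le_of_lt hP0)]
    have hNimlow : 2.5 / (p:ℝ) ^ 2 ≤ N.im := by
      rw [hNim]
      have h1 : 4 / (p:ℝ) / (p:ℝ) ≤ z.im / (p:ℝ) := by rw [hzim]; gcongr
      have h2 : 4 / (p:ℝ) / (p:ℝ) = 4 / (p:ℝ) ^ 2 := by ring
      ring_nf at h1 h2 hRim hRsmall ⊢
      linarith
    have hNlow : 2.5 / (p:ℝ) ^ 2 ≤ ‖N‖ := by
      have h1 : |N.im| ≤ ‖N‖ := Complex.abs_im_le_norm N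
      have h2 := le_abs_self N.im
      linarith
    have hS0 : (0:ℝ) < ‖S‖ := by linarith
    calc 1 / (p:ℝ) ^ 2 ≤ 1.25 / (p:ℝ) ^ 2 := by gcongr <;> norm_num
      _ = (2.5 / (p:ℝ) ^ 2) / 2 := by ring
      _ ≤ ‖N‖ / ‖S‖ := by
          apply div_le_div₀ (norm_nonneg N) hNlow hS0 hSup
end
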